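/- arXiv:cs/0507063 — 2 statements merged into one kernel-verified Lean document; each statement's English description precedes it below -/
import Mathlib

section
/- The TF-1 update function mapping (a,b,c,d) to (a ⊕ s ⊕ 2c·(b∨C₁), b ⊕ (s∧a) ⊕ 2c·(d∨C₃), c ⊕ (s∧a∧b) ⊕ 2a·(d∨C₃), d ⊕ (s∧a∧b∧c) ⊕ 2a·(b∨C₁)), with s = (C + (a∧b∧c∧d)) ⊕ (a∧b∧c∧d) and all arithmetic modulo 2^w, is a T-function: if two input quadruples agree modulo 2^k componentwise (k ≤ w), then the output quadruples agree modulo 2^k componentwise. -/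
/-- The auxiliary word `s` in the TF-1 update function. -/
def sAux (w C a b c d : ℕ) : ℕ :=
  ((C + (a &&& b &&& c &&& d)) % 2 ^ w) ^^^ (a &&& b &&& c &&& d)

/-- The TF-1 update function, all arithmetic modulo `2 ^ w`. -/
def tf1Update (w C C₁ C₃ : ℕ) (a b c d : ℕ) : ℕ × ℕ × ℕ × ℕ :=
  let s := sAux w C a b c d
  (a ^^^ s ^^^ (2 * c * (b ||| C₁)) % 2 ^ w,
   b ^^^ (s &&& a) ^^^ (2 * c * (d ||| C₃)) % 2 ^ w,
   c ^^^ (s &&& a &&& b) ^^^ (2 * a * (d ||| C₃)) % 2 ^ w,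
   d ^^^ (s &&& a &&& b &&& c) ^^^ (2 * a * (b ||| C₁)) % 2 ^ w)

/-! Congruence modulo `2 ^ k` is respected by `+`, `*` and by the bitwise operations (the low `k`
bits of `x ∧ y`, `x ∨ y`, `x ⊕ y` are computed from the low `k` bits of `x` and `y`), and, since
`k ≤ w`, by reduction modulo `2 ^ w`. Every component of the TF-1 update is built from the inputs and
constants by these operations alone. -/

namespace Nat.ModEq

variable {k x x' y y' : ℕ}

protected theorem land (hx : x ≡ x' [MOD 2 ^ k]) (hy : y ≡ y' [MOD 2 ^ k]) :
    x &&& y ≡ x' &&& y' [MOD 2 ^ k] := by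
  rw [Nat.ModEq, Nat.and_mod_two_pow, Nat.and_mod_two_pow, hx, hy]

protected theorem lor (hx : x ≡ x' [MOD 2 ^ k]) (hy : y ≡ y' [MOD 2 ^ k]) :
    x ||| y ≡ x' ||| y' [MOD 2 ^ k] := by
  rw [Nat.ModEq, Nat.or_mod_two_pow, Nat.or_mod_two_pow, hx, hy]

protected theorem xor (hx : x ≡ x' [MOD 2 ^ k]) (hy : y ≡ y' [MOD 2 ^ k]) :
    x ^^^ y ≡ x' ^^^ y' [MOD 2 ^ k] := by
  rw [Nat.ModEq, Nat.xor_mod_two_pow, Nat.xor_mod_two_pow, hx, hy]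

protected theorem mod_of_dvd {m n a b : ℕ} (hmn : m ∣ n) (h : a ≡ b [MOD m]) :
    a % n ≡ b % n [MOD m] :=
  (Nat.mod_mod_of_dvd a hmn).trans (h.trans (Nat.mod_mod_of_dvd b hmn).symm)

end Nat.ModEq

theorem sAux_modEq {w k C a b c d a' b' c' d' : ℕ} (hk : k ≤ w)
    (ha : a ≡ a' [MOD 2 ^ k]) (hb : b ≡ b' [MOD 2 ^ k])
    (hc : c ≡ c' [MOD 2 ^ k]) (hd : d ≡ d' [MOD 2 ^ k]) :
    sAux w C a b c d ≡ sAux w C a' b' c' d' [MOD 2 ^ k] := by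
  have habcd := ((ha.land hb).land hc).land hd
  exact (((Nat.ModEq.refl C).add habcd).mod_of_dvd (pow_dvd_pow 2 hk)).xor habcd

theorem tf1Update_tfun_general (w k C C₁ C₃ : ℕ) (hk : k ≤ w)
    (a b c d a' b' c' d' : ℕ)
    (hae : a ≡ a' [MOD 2 ^ k]) (hbe : b ≡ b' [MOD 2 ^ k])
    (hce : c ≡ c' [MOD 2 ^ k]) (hde : d ≡ d' [MOD 2 ^ k]) :
    (tf1Update w C C₁ C₃ a b c d).1 ≡ (tf1Update w C C₁ C₃ a' b' c' d').1 [MOD 2 ^ k] ∧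
    (tf1Update w C C₁ C₃ a b c d).2.1 ≡ (tf1Update w C C₁ C₃ a' b' c' d').2.1 [MOD 2 ^ k] ∧
    (tf1Update w C C₁ C₃ a b c d).2.2.1 ≡ (tf1Update w C C₁ C₃ a' b' c' d').2.2.1 [MOD 2 ^ k] ∧
    (tf1Update w C C₁ C₃ a b c d).2.2.2 ≡ (tf1Update w C C₁ C₃ a' b' c' d').2.2.2 [MOD 2 ^ k] := by
  have hs := sAux_modEq (C := C) hk hae hbe hce hde
  have hdvd : 2 ^ k ∣ 2 ^ w := pow_dvd_pow 2 hk
  have hcb := (((Nat.ModEq.refl 2).mul hce).mul (hbe.lor (.refl C₁))).mod_of_dvd hdvd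
  have hcd := (((Nat.ModEq.refl 2).mul hce).mul (hde.lor (.refl C₃))).mod_of_dvd hdvd
  have had := (((Nat.ModEq.refl 2).mul hae).mul (hde.lor (.refl C₃))).mod_of_dvd hdvd
  have hab := (((Nat.ModEq.refl 2).mul hae).mul (hbe.lor (.refl C₁))).mod_of_dvd hdvd
  exact ⟨(hae.xor hs).xor hcb, (hbe.xor (hs.land hae)).xor hcd,
    (hce.xor ((hs.land hae).land hbe)).xor had,
    (hde.xor (((hs.land hae).land hbe).land hce)).xor hab⟩

theorem tf1Update_tfun (w k C C₁ C₃ : ℕ) (hk : k ≤ w)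
    (hC : C < 2 ^ w) (hC₁ : C₁ < 2 ^ w) (hC₃ : C₃ < 2 ^ w)
    (a b c d a' b' c' d' : ℕ)
    (ha : a < 2 ^ w) (hb : b < 2 ^ w) (hc : c < 2 ^ w) (hd : d < 2 ^ w)
    (ha' : a' < 2 ^ w) (hb' : b' < 2 ^ w) (hc' : c' < 2 ^ w) (hd' : d' < 2 ^ w)
    (hae : a ≡ a' [MOD 2 ^ k]) (hbe : b ≡ b' [MOD 2 ^ k])
    (hce : c ≡ c' [MOD 2 ^ k]) (hde : d ≡ d' [MOD 2 ^ k]) :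
    (tf1Update w C C₁ C₃ a b c d).1 ≡ (tf1Update w C C₁ C₃ a' b' c' d').1 [MOD 2 ^ k] ∧
    (tf1Update w C C₁ C₃ a b c d).2.1 ≡ (tf1Update w C C₁ C₃ a' b' c' d').2.1 [MOD 2 ^ k] ∧
    (tf1Update w C C₁ C₃ a b c d).2.2.1 ≡ (tf1Update w C C₁ C₃ a' b' c' d').2.2.1 [MOD 2 ^ k] ∧
    (tf1Update w C C₁ C₃ a b c d).2.2.2 ≡ (tf1Update w C C₁ C₃ a' b' c' d').2.2.2 [MOD 2 ^ k] :=
  tf1Update_tfun_general w k C C₁ C₃ hk a b c d a' b' c' d' hae hbe hce hde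
end

section
/- Let w be even and let the TF-1 output be Out(A) = S(T₂(A)) · (F(A) ∨ 1) mod 2^w, where S is the half-swap and T₂, F map internal states to words below 2^w. If Out(A) ≡ 0 (mod 2^w), then T₂(A) = 0. -/
/-- The half-swap function on `w`-bit words. -/
def S (w x : ℕ) : ℕ := (x / 2 ^ (w / 2) + x * 2 ^ (w / 2)) % 2 ^ w

lemma Nat.odd_or_one (n : ℕ) : Odd (n ||| 1) := by
  rw [Nat.odd_iff, Nat.or_mod_two_eq_one]
  exact Or.inr rfl

lemma S_lt (w x : ℕ) : S w x < 2 ^ w :=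
  Nat.mod_lt _ (by positivity)

lemma S_two_mul_of_lt {k x : ℕ} (hx : x < 2 ^ (2 * k)) :
    S (2 * k) x = x / 2 ^ k + x % 2 ^ k * 2 ^ k := by
  have hsq : (2 : ℕ) ^ (2 * k) = 2 ^ k * 2 ^ k := by rw [two_mul, pow_add]
  have hhigh : x / 2 ^ k < 2 ^ k := Nat.div_lt_of_lt_mul (hsq ▸ hx)
  have hlow : x % 2 ^ k < 2 ^ k := Nat.mod_lt _ (by positivity)
  have hsplit := Nat.div_add_mod x (2 ^ k)
  set a := x / 2 ^ k
  set b := x % 2 ^ k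
  have hsum : a + x * 2 ^ k = a + b * 2 ^ k + a * (2 ^ k * 2 ^ k) := by
    rw [← hsplit]
    ring
  have hfits : a + b * 2 ^ k < 2 ^ k * 2 ^ k := by
    nlinarith [Nat.mul_le_mul_right (2 ^ k) hlow]
  rw [S, Nat.mul_div_cancel_left k two_pos, hsum, hsq, Nat.add_mul_mod_self_right,
    Nat.mod_eq_of_lt hfits]

lemma eq_zero_of_S_eq_zero {w x : ℕ} (hw : Even w) (hx : x < 2 ^ w) (hS : S w x = 0) :
    x = 0 := by
  obtain ⟨k, rfl⟩ := hw
  rw [← two_mul] at hx hS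
  rw [S_two_mul_of_lt hx, Nat.add_eq_zero_iff, Nat.mul_eq_zero] at hS
  obtain ⟨hhigh, hlow | hpow⟩ := hS
  · rw [← Nat.div_add_mod x (2 ^ k), hhigh, hlow, mul_zero]
  · exact absurd hpow (by positivity)

theorem tf1_output_zero_general {α : Type*} (w : ℕ) (hweven : Even w)
    (T₂ F : α → ℕ) (hT₂ : ∀ A, T₂ A < 2 ^ w)
    (A : α) (h : (S w (T₂ A) * (F A ||| 1)) % 2 ^ w = 0) :
    T₂ A = 0 := by
  -- Multiplying by an odd number is invertible modulo `2^w`, so the half-swap itself vanishes.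
  have hcop : Nat.Coprime (2 ^ w) (F A ||| 1) :=
    Nat.Coprime.pow_left _ (Nat.coprime_two_left.mpr (Nat.odd_or_one _))
  have hdvd : 2 ^ w ∣ S w (T₂ A) :=
    hcop.dvd_of_dvd_mul_right (Nat.dvd_of_mod_eq_zero h)
  have hS : S w (T₂ A) = 0 := Nat.eq_zero_of_dvd_of_lt hdvd (S_lt w _)
  exact eq_zero_of_S_eq_zero hweven (hT₂ A) hS

theorem tf1_output_zero {α : Type*} (w : ℕ) (hw : 0 < w) (hweven : Even w)
    (T₂ F : α → ℕ) (hT₂ : ∀ A, T₂ A < 2 ^ w) (hF : ∀ A, F A < 2 ^ w)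
    (A : α) (h : (S w (T₂ A) * (F A ||| 1)) % 2 ^ w = 0) :
    T₂ A = 0 :=
  tf1_output_zero_general w hweven T₂ F hT₂ A h
end
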